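/- For all h ≥ 1 and k ≥ 2, every deterministic k-way branching program solving BT^h_2(k) has depth at least 2^h. -/

import Mathlib

/-! Framework: the tree evaluation problem and deterministic k-way branching programs.

The balanced binary tree of height `h` has nodes numbered heap-style `1, …, 2^h - 1`:
the root is node `1` and the children of node `i` are `2i` and `2i+1`.
Elements of `[k] = {1,…,k}` are represented by `Fin k` (the element `1 ∈ [k]`
corresponds to `(0 : Fin k)`). -/

/-- Node `i` is a leaf of the height-`h` balanced binary tree. -/
def IsLeafNode (h i : ℕ) : Prop := 2 ^ (h - 1) ≤ i ∧ i < 2 ^ h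

/-- Node `i` is an internal node of the height-`h` balanced binary tree. -/
def IsInternalNode (h i : ℕ) : Prop := 1 ≤ i ∧ i < 2 ^ (h - 1)

/-- An input to the height-`h` tree evaluation problem over `[k]`: a binary function on `[k]`
for each internal node and a value in `[k]` for each leaf (values at irrelevant indices
are ignored). -/
structure TEInput (h k : ℕ) where
  f : ℕ → Fin k → Fin k → Fin k
  leaf : ℕ → Fin k

/-- Auxiliary recursion (on fuel) computing node values. -/
def TEInput.valAux {h k : ℕ} (I : TEInput h k) : ℕ → ℕ → Fin k
  | 0, i => I.leaf i
  | m + 1, i =>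
      if 2 ^ (h - 1) ≤ i then I.leaf i
      else I.f i (I.valAux m (2 * i)) (I.valAux m (2 * i + 1))

/-- The value `v_i^I` of node `i`: the leaf value if `i` is a leaf, and
`f_i^I (v_{2i}^I, v_{2i+1}^I)` if `i` is an internal node. -/
def TEInput.val {h k : ℕ} (I : TEInput h k) (i : ℕ) : Fin k := I.valAux h i

/-- The input variables of the tree evaluation problem: one variable `f_i(a,b)` for each
internal node `i` and `a b ∈ [k]`, and one variable `l_i` for each leaf `i`. -/
inductive TEVar (h k : ℕ) where
  | internal (i : ℕ) (hi : IsInternalNode h i) (a b : Fin k) : TEVar h k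
  | leaf (i : ℕ) (hi : IsLeafNode h i) : TEVar h k

/-- The value of a variable under an input. -/
def TEInput.evalVar {h k : ℕ} (I : TEInput h k) : TEVar h k → Fin k
  | .internal i _ a b => I.f i a b
  | .leaf i _ => I.leaf i

/-- The node a variable belongs to. -/
def TEVar.node {h k : ℕ} : TEVar h k → ℕ
  | .internal i _ _ _ => i
  | .leaf i _ => i

/-- `X` is the thrifty `i` variable of input `I`: it is `f_i(v_{2i}^I, v_{2i+1}^I)`
if `i` is an internal node, and `l_i` if `i` is a leaf. -/
def IsThriftyVarOf {h k : ℕ} (I : TEInput h k) (i : ℕ) : TEVar h k → Prop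
  | .internal j _ a b => j = i ∧ a = I.val (2 * j) ∧ b = I.val (2 * j + 1)
  | .leaf j _ => j = i

/-- A deterministic `k`-way branching program with variables indexed by `V` and
output set `R`: a set of states (of cardinality `size`), a start state, each state
labeled either with a variable to query (non-output states, with `k` out-edges
labeled `1,…,k`) or with an output value (output sink states). -/
structure DetBP (V : Type) (k : ℕ) (R : Type) where
  size : ℕ
  start : Fin size
  label : Fin size → V ⊕ R
  next : Fin size → Fin k → Fin size

namespace DetBP

variable {V : Type} {k : ℕ} {R : Type}

/-- One step of computation on input `x`: from a state querying variable `v`, follow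
the out-edge labeled `x v`; output states are sinks. -/
def step (B : DetBP V k R) (x : V → Fin k) (s : Fin B.size) : Fin B.size :=
  match B.label s with
  | .inl v => B.next s (x v)
  | .inr _ => s

/-- The state of the computation path of `x` at time `t`. -/
def run (B : DetBP V k R) (x : V → Fin k) (t : ℕ) : Fin B.size :=
  (B.step x)^[t] B.start

/-- The depth of `B` is at most `D`: on every input, the computation path reaches an
output state within its first `D` states. -/
def DepthLE (B : DetBP V k R) (D : ℕ) : Prop :=
  ∀ x : V → Fin k, ∃ t < D, (B.label (B.run x t)).isRight = true

/-- `B` solves the function tree evaluation problem `FT^h_2(k)`: on every input `I`, the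
computation path ends in the output state labeled with the root value `v_1^I`. -/
def SolvesFT {h : ℕ} (B : DetBP (TEVar h k) k (Fin k)) : Prop :=
  ∀ I : TEInput h k, ∃ t, B.label (B.run I.evalVar t) = Sum.inr (I.val 1)

/-- `B` solves the decision tree evaluation problem `BT^h_2(k)`: on every input `I`, the
computation path ends in the output state labeled with whether `v_1^I = 1`
(the element `1 ∈ [k]` being `(0 : Fin k)`). -/
def SolvesBT {h : ℕ} (B : DetBP (TEVar h k) k Bool) : Prop :=
  ∀ I : TEInput h k, ∃ t, B.label (B.run I.evalVar t) = Sum.inr (decide ((I.val 1 : Fin k).val = 0))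

/-- `B` is thrifty: on every input `I`, every query `f_i(a,b)` made along the computation
path of `I` satisfies `a = v_{2i}^I` and `b = v_{2i+1}^I`. -/
def Thrifty {h : ℕ} (B : DetBP (TEVar h k) k R) : Prop :=
  ∀ (I : TEInput h k) (t i : ℕ) (hi : IsInternalNode h i) (a b : Fin k),
    B.label (B.run I.evalVar t) = Sum.inl (TEVar.internal i hi a b) →
    a = I.val (2 * i) ∧ b = I.val (2 * i + 1)

end DetBP

/-! An adversary argument. On the input where every node value is `0`, a program of depth at
most `2^h - 1` stops after querying fewer than `2^h - 1` variables, so some node `j` of the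
tree is never touched. Redefining only the variables of node `j` so that `j` outputs `1`, and
all other gates are ORs, yields an input whose root value is `1` but on which the program
follows the same path and gives the same answer. -/

namespace DetBP

variable {V R : Type} {k : ℕ} {B : DetBP V k R}

def Outputs (B : DetBP V k R) (x : V → Fin k) (r : R) : Prop :=
  ∃ t, B.label (B.run x t) = .inr r

theorem run_succ (B : DetBP V k R) (x : V → Fin k) (t : ℕ) :
    B.run x (t + 1) = B.step x (B.run x t) :=
  Function.iterate_succ_apply' _ _ _

theorem run_add_of_label_eq_inr {x : V → Fin k} {t : ℕ} {r : R}
    (ht : B.label (B.run x t) = .inr r) (s : ℕ) : B.run x (t + s) = B.run x t := by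
  induction s with
  | zero => rfl
  | succ s ih => rw [← add_assoc, run_succ, ih, step, ht]

theorem Outputs.unique {x : V → Fin k} {r r' : R} (hr : B.Outputs x r) (hr' : B.Outputs x r') :
    r = r' := by
  obtain ⟨t, ht⟩ := hr
  obtain ⟨t', ht'⟩ := hr'
  wlog hle : t ≤ t' generalizing t t' r r'
  · exact (this t' ht' t ht (by omega)).symm
  rw [← Nat.add_sub_cancel' hle, run_add_of_label_eq_inr ht, ht] at ht'
  exact Sum.inr.inj ht'

def queried [DecidableEq V] (B : DetBP V k R) (x : V → Fin k) (T : ℕ) : Finset V :=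
  (Finset.range T).biUnion fun t => (B.label (B.run x t)).elim (fun v => {v}) fun _ => ∅

variable [DecidableEq V]

theorem mem_queried {x : V → Fin k} {T : ℕ} {v : V} :
    v ∈ B.queried x T ↔ ∃ t < T, B.label (B.run x t) = .inl v := by
  simp only [queried, Finset.mem_biUnion, Finset.mem_range]
  refine exists_congr fun t => and_congr_right fun _ => ?_
  cases B.label (B.run x t) <;> simp [eq_comm]

theorem card_queried_le (B : DetBP V k R) (x : V → Fin k) (T : ℕ) :
    (B.queried x T).card ≤ T :=
  Finset.card_biUnion_le.trans <| (Finset.sum_le_card_nsmul _ _ 1 fun t _ => by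
    cases B.label (B.run x t) <;> simp).trans (by simp)

theorem run_eq_of_eqOn_queried {x x' : V → Fin k} {T : ℕ}
    (hx : Set.EqOn x' x (B.queried x T)) {t : ℕ} (ht : t ≤ T) : B.run x' t = B.run x t := by
  induction t with
  | zero => rfl
  | succ t ih =>
    rw [run_succ, run_succ, ih (by omega), step, step]
    cases hl : B.label (B.run x t) with
    | inl v => exact congrArg _ (hx (mem_queried.2 ⟨t, by omega, hl⟩))
    | inr r => rfl

theorem DepthLE.exists_certificate {D : ℕ} (hD : B.DepthLE D) (x : V → Fin k) :
    ∃ Q : Finset V, Q.card < D ∧ ∃ r, B.Outputs x r ∧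
      ∀ x' : V → Fin k, Set.EqOn x' x Q → B.Outputs x' r := by
  obtain ⟨T, hTD, hT⟩ := hD x
  obtain ⟨r, hr⟩ := Sum.isRight_iff.1 hT
  refine ⟨B.queried x T, (B.card_queried_le x T).trans_lt hTD, r, ⟨T, hr⟩,
    fun x' hx' => ⟨T, ?_⟩⟩
  rw [run_eq_of_eqOn_queried hx' le_rfl, hr]

end DetBP

namespace TEInput

variable {h k : ℕ}

theorem valAux_succ (I : TEInput h k) (m i : ℕ) :
    I.valAux (m + 1) i =
      if 2 ^ (h - 1) ≤ i then I.leaf i else I.f i (I.valAux m (2 * i)) (I.valAux m (2 * i + 1)) :=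
  rfl

theorem valAux_succ_of_le (I : TEInput h k) {m i : ℕ} (hm : 2 ^ (h - 1) ≤ i * 2 ^ m) :
    I.valAux (m + 1) i = I.valAux m i := by
  induction m generalizing i with
  | zero => simp_all [valAux]
  | succ m ih =>
    have hl : 2 ^ (h - 1) ≤ 2 * i * 2 ^ m := by rw [pow_succ] at hm; linarith
    have hr : 2 ^ (h - 1) ≤ (2 * i + 1) * 2 ^ m := hl.trans (by gcongr; omega)
    rw [valAux_succ I (m + 1) i, valAux_succ I m i, ih hl, ih hr]

theorem valAux_eq_of_le (I : TEInput h k) {m n i : ℕ} (hm : 2 ^ (h - 1) ≤ i * 2 ^ m)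
    (hmn : m ≤ n) : I.valAux n i = I.valAux m i := by
  induction n, hmn using Nat.le_induction with
  | base => rfl
  | succ n hmn ih => rw [I.valAux_succ_of_le (hm.trans (by gcongr; omega)), ih]

theorem val_eq_leaf (I : TEInput h k) {i : ℕ} (hi : 2 ^ (h - 1) ≤ i) : I.val i = I.leaf i :=
  I.valAux_eq_of_le (m := 0) (by simpa using hi) (Nat.zero_le h)

theorem val_eq_f (I : TEInput h k) {i : ℕ} (hi : IsInternalNode h i) :
    I.val i = I.f i (I.val (2 * i)) (I.val (2 * i + 1)) := by
  obtain ⟨hi1, hih⟩ := hi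
  obtain ⟨n, rfl⟩ : ∃ n, h = n + 1 := ⟨h - 1, by grind⟩
  have hchild (c : ℕ) (hc : 2 * i ≤ c) : I.valAux n c = I.val c :=
    (I.valAux_eq_of_le (Nat.le_mul_of_pos_left _ (by omega)) (Nat.le_succ n)).symm
  rw [val, valAux_succ, if_neg (by omega), hchild _ le_rfl, hchild _ (by omega)]

variable [NeZero k]

/-- Reading `1` as true and `0` as false, node `i` of this input computes whether `j` lies in
the subtree rooted at `i`: node `j` outputs `1` and every other node is an OR gate. As no node
is numbered `0`, `markNode h k 0` is the input on which every node value is `0`. -/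
def markNode (h k : ℕ) [NeZero k] (j : ℕ) : TEInput h k where
  f i a b := if i = j ∨ a = 1 ∨ b = 1 then 1 else 0
  leaf i := if i = j then 1 else 0

theorem markNode_f (j i : ℕ) (a b : Fin k) :
    (markNode h k j).f i a b = if i = j ∨ a = 1 ∨ b = 1 then 1 else 0 :=
  rfl

theorem markNode_leaf (j i : ℕ) : (markNode h k j).leaf i = if i = j then 1 else 0 :=
  rfl

theorem markNode_val_eq_one {i j d : ℕ} (hj : j < 2 ^ h) (hi : 1 ≤ i)
    (hd : j / 2 ^ d = i) : (markNode h k j).val i = 1 := by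
  induction d generalizing i with
  | zero =>
    obtain rfl : j = i := by simpa using hd
    by_cases hleaf : 2 ^ (h - 1) ≤ j
    · simp [val_eq_leaf _ hleaf, markNode_leaf]
    · simp [(markNode h k j).val_eq_f ⟨hi, by omega⟩, markNode_f]
  | succ d ih =>
    have hchild : j / 2 ^ d / 2 = i := by rw [Nat.div_div_eq_div_mul, ← pow_succ, hd]
    have hj2 : j / 2 ^ d < 2 ^ h := (Nat.div_le_self _ _).trans_lt hj
    have hpow : 2 ^ h = 2 * 2 ^ (h - 1) := by
      rw [← pow_succ', Nat.sub_add_cancel (Nat.one_le_iff_ne_zero.2 ?_)]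
      rintro rfl
      omega
    rw [(markNode h k j).val_eq_f ⟨hi, by omega⟩, markNode_f]
    rcases Nat.even_or_odd' (j / 2 ^ d) with ⟨c, hc | hc⟩
    · obtain rfl : c = i := by omega
      simp [← hc, ih (by omega) rfl]
    · obtain rfl : c = i := by omega
      simp [← hc, ih (by omega) rfl]

theorem markNode_val_eq_zero {i j : ℕ} (hi : 1 ≤ i) (hj : ∀ d, j / 2 ^ d ≠ i) :
    (markNode h k j).val i = 0 := by
  have hij : i ≠ j := by simpa using (hj 0).symm
  by_cases hleaf : 2 ^ (h - 1) ≤ i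
  · simp [val_eq_leaf _ hleaf, markNode_leaf, hij]
  · have hchild (c : ℕ) (hc : c / 2 = i) (d : ℕ) : j / 2 ^ d ≠ c := fun hd =>
      hj (d + 1) (by rw [pow_succ, ← Nat.div_div_eq_div_mul, hd, hc])
    have hpow : 2 ^ (h - 1) ≤ 2 ^ h := Nat.pow_le_pow_right two_pos (Nat.sub_le h 1)
    rw [(markNode h k j).val_eq_f ⟨hi, by omega⟩,
      markNode_val_eq_zero (by omega) (hchild (2 * i) (by omega)),
      markNode_val_eq_zero (by omega) (hchild (2 * i + 1) (by omega))]
    simp [markNode_f, hij]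
termination_by 2 ^ h - i

theorem markNode_val_root {j : ℕ} (hj : j ∈ Finset.Ico 1 (2 ^ h)) :
    (markNode h k j).val 1 = 1 := by
  rw [Finset.mem_Ico] at hj
  refine markNode_val_eq_one hj.2 le_rfl (d := Nat.log 2 j) (Nat.div_eq_of_lt_le ?_ ?_)
  · simpa using Nat.pow_log_le_self 2 (by omega : j ≠ 0)
  · simpa [pow_succ'] using Nat.lt_pow_succ_log_self one_lt_two j

theorem markNode_zero_val_root : (markNode h k 0).val 1 = 0 :=
  markNode_val_eq_zero le_rfl (by simp)

theorem evalVar_markNode_of_node_ne {j : ℕ} {v : TEVar h k} (hv : v.node ≠ j) :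
    (markNode h k j).evalVar v = (markNode h k 0).evalVar v := by
  cases v with
  | internal i hi a b =>
    have : i ≠ 0 := by have := hi.1; omega
    simp_all [evalVar, markNode_f, TEVar.node]
  | leaf i hi =>
    have : i ≠ 0 := by have := hi.1; have := Nat.one_le_two_pow (n := h - 1); omega
    simp_all [evalVar, markNode_leaf, TEVar.node]

end TEInput

open TEInput

theorem stmt_10_general (h k : ℕ) (hk : 2 ≤ k) (B : DetBP (TEVar h k) k Bool)
    (hB : B.SolvesBT) : ¬ B.DepthLE (2 ^ h - 1) := by
  classical
  have : NeZero k := ⟨by omega⟩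
  intro hD
  obtain ⟨Q, hQ, r, hr, hQr⟩ := hD.exists_certificate (markNode h k 0).evalVar
  obtain ⟨j, hj, hjQ⟩ : ∃ j ∈ Finset.Ico 1 (2 ^ h), j ∉ Q.image TEVar.node :=
    Finset.exists_mem_notMem_of_card_lt_card (by simpa using Finset.card_image_le.trans_lt hQ)
  have hr_true : r = true := by
    simpa [markNode_zero_val_root] using hr.unique (hB (markNode h k 0))
  have hr_false : r = false := by
    have hjr : B.Outputs (markNode h k j).evalVar r := hQr _ fun v hv =>
      evalVar_markNode_of_node_ne fun hvj => hjQ (hvj ▸ Finset.mem_image_of_mem _ hv)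
    simpa [markNode_val_root hj, Fin.val_one', Nat.mod_eq_of_lt hk] using
      hjr.unique (hB (markNode h k j))
  exact absurd (hr_true.symm.trans hr_false) Bool.noConfusion

/-- For all `h ≥ 1` and `k ≥ 2`, every deterministic `k`-way branching program
solving `BT^h_2(k)` has depth at least `2^h` (i.e. its depth is not at most `2^h - 1`). -/
theorem stmt_10 (h k : ℕ) (hh : 1 ≤ h) (hk : 2 ≤ k) (B : DetBP (TEVar h k) k Bool)
    (hB : B.SolvesBT) : ¬ B.DepthLE (2 ^ h - 1) :=
  stmt_10_general h k hk B hB
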